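/- Let ν be a fuzzy signed measure on a fuzzy σ-algebra σ on a set X which never takes the value +∞, and let λ = sup{ ν(μ_A) : A ∈ σ is a positive fuzzy set for ν }. Then the supremum is attained: there exists a positive fuzzy set A ∈ σ for ν with ν(μ_A) = λ, and moreover λ < ∞. -/
import Mathlib


open Filter Topology

/-- A fuzzy set on `X` is a function `X → ℝ` with values in `[0,1]`. -/
def IsFuzzy {X : Type*} (μ : X → ℝ) : Prop := ∀ x, 0 ≤ μ x ∧ μ x ≤ 1

/-- A fuzzy σ-algebra on `X`: a family of fuzzy sets containing all constants in `[0,1]`,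
closed under complement `1 - μ` and under pointwise suprema of sequences. -/
structure FuzzySigmaAlgebra (X : Type*) where
  sets : Set (X → ℝ)
  fuzzy : ∀ μ ∈ sets, IsFuzzy μ
  const_mem : ∀ c : ℝ, 0 ≤ c → c ≤ 1 → (fun _ => c) ∈ sets
  compl_mem : ∀ μ ∈ sets, (fun x => 1 - μ x) ∈ sets
  sup_mem : ∀ μ : ℕ → (X → ℝ), (∀ n, μ n ∈ sets) → (fun x => ⨆ n, μ n x) ∈ sets

/-- An outer fuzzy measure on `X`: an extended-real valued function on all fuzzy sets with
`m 0 = 0`, monotone, and countably subadditive in the sense `m (⋁ μₙ) ≤ ⨆ m (μₙ)`. -/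
structure IsOuterFuzzyMeasure {X : Type*} (m : (X → ℝ) → EReal) : Prop where
  zero : m (fun _ => 0) = 0
  mono : ∀ μ η : X → ℝ, IsFuzzy μ → IsFuzzy η → (∀ x, μ x ≤ η x) → m μ ≤ m η
  subadd : ∀ μ : ℕ → (X → ℝ), (∀ n, IsFuzzy (μ n)) →
    m (fun x => ⨆ n, μ n x) ≤ ⨆ n, m (μ n)

/-- A fuzzy measure on a fuzzy σ-algebra `σ`: values in `ℝ ∪ {∞}` (never `-∞` on `σ`),
vanishing at `0`, monotone on nonnegative values, modular, and continuous from below. -/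
structure IsFuzzyMeasure {X : Type*} (σ : FuzzySigmaAlgebra X)
    (m : (X → ℝ) → EReal) : Prop where
  ne_bot : ∀ μ ∈ σ.sets, m μ ≠ ⊥
  zero : m (fun _ => 0) = 0
  mono : ∀ μ ∈ σ.sets, ∀ η ∈ σ.sets, 0 ≤ m μ → 0 ≤ m η →
    (∀ x, μ x ≤ η x) → m μ ≤ m η
  modular : ∀ μ ∈ σ.sets, ∀ η ∈ σ.sets,
    m (fun x => max (μ x) (η x)) + m (fun x => min (μ x) (η x)) = m μ + m η
  cont : ∀ μ : ℕ → (X → ℝ), (∀ n, μ n ∈ σ.sets) → (∀ n x, μ n x ≤ μ (n + 1) x) →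
    Tendsto (fun n => m (μ n)) atTop (𝓝 (m (fun x => ⨆ n, μ n x)))

/-- A fuzzy signed measure on a fuzzy σ-algebra `σ`: extended-real valued, omitting at least
one of `±∞` on `σ`, vanishing at `0`, monotone on nonnegative (resp. antitone on nonpositive)
values, modular, and continuous from below. -/
structure IsFuzzySignedMeasure {X : Type*} (σ : FuzzySigmaAlgebra X)
    (ν : (X → ℝ) → EReal) : Prop where
  omits : (∀ μ ∈ σ.sets, ν μ ≠ ⊤) ∨ (∀ μ ∈ σ.sets, ν μ ≠ ⊥)
  zero : ν (fun _ => 0) = 0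
  mono_nonneg : ∀ μ ∈ σ.sets, ∀ η ∈ σ.sets, 0 ≤ ν μ → 0 ≤ ν η →
    (∀ x, μ x ≤ η x) → ν μ ≤ ν η
  mono_nonpos : ∀ μ ∈ σ.sets, ∀ η ∈ σ.sets, ν μ ≤ 0 → ν η ≤ 0 →
    (∀ x, μ x ≤ η x) → ν η ≤ ν μ
  modular : ∀ μ ∈ σ.sets, ∀ η ∈ σ.sets,
    ν (fun x => max (μ x) (η x)) + ν (fun x => min (μ x) (η x)) = ν μ + ν η
  cont : ∀ μ : ℕ → (X → ℝ), (∀ n, μ n ∈ σ.sets) → (∀ n x, μ n x ≤ μ (n + 1) x) →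
    Tendsto (fun n => ν (μ n)) atTop (𝓝 (ν (fun x => ⨆ n, μ n x)))

/-- `μE` is `m`-fuzzy measurable (Carathéodory condition with `∧` = pointwise min and
complement `1 - ·`). -/
def MStarMeasurable {X : Type*} (m : (X → ℝ) → EReal) (μE : X → ℝ) : Prop :=
  ∀ μA : X → ℝ, IsFuzzy μA →
    m μA = m (fun x => min (μA x) (μE x)) + m (fun x => min (μA x) (1 - μE x))

/-- `A ∈ σ` is a positive fuzzy set for `ν`: every `E ∈ σ` with `μ_E ≤ μ_A` has `ν E ≥ 0`. -/
def IsPositiveFuzzySet {X : Type*} (σ : FuzzySigmaAlgebra X)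
    (ν : (X → ℝ) → EReal) (A : X → ℝ) : Prop :=
  A ∈ σ.sets ∧ ∀ E ∈ σ.sets, (∀ x, E x ≤ A x) → 0 ≤ ν E

/-- `A ∈ σ` is a negative fuzzy set for `ν`: every `E ∈ σ` with `μ_E ≤ μ_A` has `ν E ≤ 0`. -/
def IsNegativeFuzzySet {X : Type*} (σ : FuzzySigmaAlgebra X)
    (ν : (X → ℝ) → EReal) (A : X → ℝ) : Prop :=
  A ∈ σ.sets ∧ ∀ E ∈ σ.sets, (∀ x, E x ≤ A x) → ν E ≤ 0

-- auxiliary lemmas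
private lemma ereal_cancel {a b c : EReal} (hcb : c ≠ ⊥) (hct : c ≠ ⊤)
    (h : b + c ≤ a + c) : b ≤ a := by
  lift c to ℝ using ⟨hct, hcb⟩
  exact (EReal.addLECancellable_coe c).add_le_add_iff_right.mp h

private lemma real_min_iSup {a : ℝ} {b : ℕ → ℝ}
    (ha : a ≤ ⨆ n, b n) : (⨆ n, min a (b n)) = a := by
  have hb' : BddAbove (Set.range fun n => min a (b n)) :=
    ⟨a, by rintro _ ⟨n, rfl⟩; exact min_le_left _ _⟩
  refine le_antisymm (ciSup_le fun n => min_le_left _ _) ?_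
  by_contra h
  push_neg at h
  have hbs : ∀ m, b m ≤ ⨆ n, min a (b n) := by
    intro m
    have h1 : min a (b m) ≤ ⨆ n, min a (b n) := le_ciSup hb' m
    rcases le_total a (b m) with hc | hc
    · rw [min_eq_left hc] at h1; exact absurd h1 (not_le.mpr h)
    · simpa [min_eq_right hc] using h1
  exact absurd (ha.trans (ciSup_le hbs)) (not_le.mpr h)

private lemma real_one_sub_max (a b : ℝ) : 1 - max (1 - a) (1 - b) = min a b := by
  rcases le_total a b with h | h
  · rw [min_eq_left h, max_eq_left (by linarith)]; ring
  · rw [min_eq_right h, max_eq_right (by linarith)]; ring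

private lemma fmax_mem {X : Type*} (σ : FuzzySigmaAlgebra X) {μ η : X → ℝ}
    (hμ : μ ∈ σ.sets) (hη : η ∈ σ.sets) : (fun x => max (μ x) (η x)) ∈ σ.sets := by
  have h := σ.sup_mem (fun n => if n = 0 then μ else η)
    (fun n => by by_cases hn : n = 0 <;> simp [hn, hμ, hη])
  have he : (fun x => ⨆ n, (if n = 0 then μ else η) x) = fun x => max (μ x) (η x) := by
    funext x
    have hb : BddAbove (Set.range fun n => (if n = 0 then μ else η) x) :=
      ⟨max (μ x) (η x), by rintro _ ⟨n, rfl⟩; by_cases hn : n = 0 <;> simp [hn]⟩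
    refine le_antisymm (ciSup_le fun n => by by_cases hn : n = 0 <;> simp [hn]) ?_
    refine max_le ?_ ?_
    · simpa using le_ciSup hb 0
    · simpa using le_ciSup hb 1
  rwa [he] at h

private lemma fmin_mem {X : Type*} (σ : FuzzySigmaAlgebra X) {μ η : X → ℝ}
    (hμ : μ ∈ σ.sets) (hη : η ∈ σ.sets) : (fun x => min (μ x) (η x)) ∈ σ.sets := by
  have h := σ.compl_mem _ (fmax_mem σ (σ.compl_mem μ hμ) (σ.compl_mem η hη))
  simpa [real_one_sub_max] using h

private lemma pos_max {X : Type*} {σ : FuzzySigmaAlgebra X} {ν : (X → ℝ) → EReal}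
    (hν : IsFuzzySignedMeasure σ ν) (hne_top : ∀ μ ∈ σ.sets, ν μ ≠ ⊤)
    {A B : X → ℝ} (hA : IsPositiveFuzzySet σ ν A) (hB : IsPositiveFuzzySet σ ν B) :
    IsPositiveFuzzySet σ ν (fun x => max (A x) (B x)) := by
  refine ⟨fmax_mem σ hA.1 hB.1, fun E hE hle => ?_⟩
  set EA : X → ℝ := fun x => min (E x) (A x) with hEAdef
  set EB : X → ℝ := fun x => min (E x) (B x) with hEBdef
  set F : X → ℝ := fun x => min (E x) (min (A x) (B x)) with hFdef
  have memEA : EA ∈ σ.sets := fmin_mem σ hE hA.1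
  have memEB : EB ∈ σ.sets := fmin_mem σ hE hB.1
  have memF : F ∈ σ.sets := fmin_mem σ hE (fmin_mem σ hA.1 hB.1)
  have hmod := hν.modular EA memEA EB memEB
  have h1 : (fun x => max (EA x) (EB x)) = E := by
    funext x
    rw [hEAdef, hEBdef]
    simp only
    rw [← min_max_distrib_left, min_eq_left (hle x)]
  have h2 : (fun x => min (EA x) (EB x)) = F := by
    funext x
    rw [hEAdef, hEBdef, hFdef]
    simp only
    rcases le_total (A x) (B x) with h | h <;>
      rcases le_total (E x) (A x) with h' | h' <;>
      rcases le_total (E x) (B x) with h'' | h'' <;>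
      simp [min_def, *] <;> linarith
  rw [h1, h2] at hmod
  have hEA0 : 0 ≤ ν EA := hA.2 EA memEA (fun x => min_le_right _ _)
  have hEB0 : 0 ≤ ν EB := hB.2 EB memEB (fun x => min_le_right _ _)
  have hF0 : 0 ≤ ν F := hA.2 F memF (fun x => (min_le_right _ _).trans (min_le_left _ _))
  have hFEA : ν F ≤ ν EA := hν.mono_nonneg F memF EA memEA hF0 hEA0
    (fun x => min_le_min le_rfl (min_le_left _ _))
  have hkey : (0 : EReal) + ν F ≤ ν E + ν F := by
    rw [zero_add, hmod]
    calc ν F = ν F + 0 := (add_zero _).symm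
    _ ≤ ν EA + ν EB := add_le_add hFEA hEB0
  exact ereal_cancel (fun hbot => by simp [hbot] at hF0) (hne_top F memF) hkey

/-- if the fuzzy signed measure `ν` never takes the value `+∞`, then the
supremum `λ` of `ν` over positive fuzzy sets is attained and finite. -/
theorem stmt_13 {X : Type*} (σ : FuzzySigmaAlgebra X) (ν : (X → ℝ) → EReal)
    (hν : IsFuzzySignedMeasure σ ν) (hne_top : ∀ μ ∈ σ.sets, ν μ ≠ ⊤) :
    (∃ A : X → ℝ, IsPositiveFuzzySet σ ν A ∧
      ν A = sSup {r : EReal | ∃ B : X → ℝ, IsPositiveFuzzySet σ ν B ∧ r = ν B}) ∧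
    sSup {r : EReal | ∃ B : X → ℝ, IsPositiveFuzzySet σ ν B ∧ r = ν B} < ⊤ := by
  set S : Set EReal := {r : EReal | ∃ B : X → ℝ, IsPositiveFuzzySet σ ν B ∧ r = ν B} with hSdef
  have hzero_mem : (fun _ : X => (0 : ℝ)) ∈ σ.sets := σ.const_mem 0 le_rfl zero_le_one
  have hzero_pos : IsPositiveFuzzySet σ ν (fun _ => 0) := by
    refine ⟨hzero_mem, fun E hE hle => ?_⟩
    have hE0 : E = fun _ => (0 : ℝ) :=
      funext fun x => le_antisymm (hle x) (σ.fuzzy E hE x).1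
    rw [hE0, hν.zero]
  have hS_ne : S.Nonempty := ⟨ν (fun _ => 0), (fun _ => 0), hzero_pos, rfl⟩
  have hpos_self : ∀ A : X → ℝ, IsPositiveFuzzySet σ ν A → 0 ≤ ν A :=
    fun A hA => hA.2 A hA.1 (fun x => le_rfl)
  obtain ⟨u, hu_mono, hu_tendsto, hu_mem⟩ := exists_seq_tendsto_sSup hS_ne (OrderTop.bddAbove S)
  choose C hC_pos hC_eq using hu_mem
  -- monotone envelope of the sequence C
  set B : ℕ → (X → ℝ) := fun n => Nat.rec (C 0) (fun k Bk => fun x => max (Bk x) (C (k + 1) x)) n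
    with hBdef
  have hB_succ : ∀ n, B (n + 1) = fun x => max (B n x) (C (n + 1) x) := fun n => rfl
  have hB_pos : ∀ n, IsPositiveFuzzySet σ ν (B n) := by
    intro n
    induction n with
    | zero => exact hC_pos 0
    | succ k ih => rw [hB_succ]; exact pos_max hν hne_top ih (hC_pos (k + 1))
  have hB_mem : ∀ n, B n ∈ σ.sets := fun n => (hB_pos n).1
  have hB_monox : ∀ n x, B n x ≤ B (n + 1) x := by
    intro n x; rw [hB_succ]; exact le_max_left _ _
  have hC_le_B : ∀ n x, C n x ≤ B n x := by
    intro n x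
    cases n with
    | zero => exact le_rfl
    | succ k => rw [hB_succ]; exact le_max_right _ _
  set A : X → ℝ := fun x => ⨆ n, B n x with hAdef
  have hA_mem : A ∈ σ.sets := σ.sup_mem B hB_mem
  have hA_tendsto : Tendsto (fun n => ν (B n)) atTop (𝓝 (ν A)) := hν.cont B hB_mem hB_monox
  -- A is a positive fuzzy set
  have hA_pos : IsPositiveFuzzySet σ ν A := by
    refine ⟨hA_mem, fun E hE hle => ?_⟩
    set G : ℕ → (X → ℝ) := fun n => fun x => min (E x) (B n x) with hGdef
    have hG_mem : ∀ n, G n ∈ σ.sets := fun n => fmin_mem σ hE (hB_mem n)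
    have hG_mono : ∀ n x, G n x ≤ G (n + 1) x :=
      fun n x => min_le_min le_rfl (hB_monox n x)
    have hG_sup : (fun x => ⨆ n, G n x) = E := by
      funext x
      exact real_min_iSup (hle x)
    have hG_tendsto : Tendsto (fun n => ν (G n)) atTop (𝓝 (ν E)) := by
      have := hν.cont G hG_mem hG_mono
      rwa [hG_sup] at this
    have hG_nonneg : ∀ n, 0 ≤ ν (G n) :=
      fun n => (hB_pos n).2 (G n) (hG_mem n) (fun x => min_le_right _ _)
    exact ge_of_tendsto' hG_tendsto hG_nonneg
  have hle1 : ν A ≤ sSup S := le_sSup ⟨A, hA_pos, rfl⟩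
  have hle2 : sSup S ≤ ν A := by
    refine le_of_tendsto_of_tendsto' hu_tendsto hA_tendsto (fun n => ?_)
    rw [hC_eq n]
    exact hν.mono_nonneg (C n) (hC_pos n).1 (B n) (hB_mem n)
      (hpos_self _ (hC_pos n)) (hpos_self _ (hB_pos n)) (hC_le_B n)
  have heq : ν A = sSup S := le_antisymm hle1 hle2
  exact ⟨⟨A, hA_pos, heq⟩, heq ▸ lt_top_iff_ne_top.mpr (hne_top A hA_mem)⟩
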